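/- arXiv:1903.00915 — 2 statements merged into one kernel-verified Lean document; each statement's English description precedes it below -/
import Mathlib

section
/- Let A ∈ B(X) be generalized Drazin invertible. Then A² is generalized Drazin invertible and the following statements are equivalent: (i) AA^⊗ = A^⊗A; (ii) (A^⊗)² = (A²)^⊗; (iii) A^⊗ = (A^⊗)²A. Moreover, if these equivalent conditions hold, then A^⊗ = A^d. -/
open ContinuousLinearMap

variable {X Y : Type*}
  [NormedAddCommGroup X] [InnerProductSpace ℂ X] [CompleteSpace X]
  [NormedAddCommGroup Y] [InnerProductSpace ℂ Y] [CompleteSpace Y]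

/-- An operator is quasinilpotent if its spectrum equals `{0}`. -/
def IsQuasinilpotent (T : X →L[ℂ] X) : Prop := spectrum ℂ T = {0}

/-- `B` is the generalized Drazin inverse of `A`. -/
def IsGDrazinInv (A B : X →L[ℂ] X) : Prop :=
  A * B = B * A ∧ B * A * B = B ∧ IsQuasinilpotent (A - A * A * B)

/-- `B` is the Wg-Drazin inverse of `A` (relative to the weight `W`); quasinilpotence of
`A - AWBWA ∈ B(X,Y)` is taken relative to `W`, i.e. `W(A - AWBWA)` is quasinilpotent. -/
def IsWgDrazinInv (W : Y →L[ℂ] X) (A B : X →L[ℂ] Y) : Prop :=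
  A ∘L W ∘L B = B ∘L W ∘L A ∧
  B ∘L W ∘L A ∘L W ∘L B = B ∧
  IsQuasinilpotent (W ∘L (A - A ∘L W ∘L B ∘L W ∘L A))

/-- `P` is the orthogonal projection of the space onto the subspace `S`. -/
def IsOrthoProjOnto (P : X →L[ℂ] X) (S : Submodule ℂ X) : Prop :=
  P * P = P ∧ ContinuousLinearMap.adjoint P = P ∧ LinearMap.range (P : X →ₗ[ℂ] X) = S

/-- `P` is the idempotent with range `L` and kernel `M` (i.e. `P = P_{L,M}`). -/
def IsIdempotentOnAlong (P : X →L[ℂ] X) (L M : Submodule ℂ X) : Prop :=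
  P * P = P ∧ LinearMap.range (P : X →ₗ[ℂ] X) = L ∧ LinearMap.ker (P : X →ₗ[ℂ] X) = M

/-- Given the generalized Drazin inverse `Ad` of `A`, `B` is the core-EP inverse of `A`:
`AB` is the orthogonal projection onto `R(A^d)` and `R(B) ⊆ R(A^d)`. -/
def IsCoreEPInv (A Ad B : X →L[ℂ] X) : Prop :=
  IsOrthoProjOnto (A * B) (LinearMap.range (Ad : X →ₗ[ℂ] X)) ∧ LinearMap.range (B : X →ₗ[ℂ] X) ≤ LinearMap.range (Ad : X →ₗ[ℂ] X)

/-- Given the generalized Drazin inverses `WAd` of `WA` and `AWd` of `AW`, `B` is the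
weighted core-EP inverse of `A`: `WAWB` is the orthogonal projection onto `R((WA)^d)`
and `R(B) ⊆ R((AW)^d)`. -/
def IsWCoreEPInv (W : Y →L[ℂ] X) (A : X →L[ℂ] Y) (WAd : X →L[ℂ] X) (AWd : Y →L[ℂ] Y)
    (B : X →L[ℂ] Y) : Prop :=
  IsOrthoProjOnto (W ∘L A ∘L W ∘L B) (LinearMap.range (WAd : X →ₗ[ℂ] X)) ∧
  LinearMap.range (B : X →ₗ[ℂ] Y) ≤ LinearMap.range (AWd : Y →ₗ[ℂ] Y)

/-- `B` is the group inverse of `A`. -/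
def IsGroupInv (A B : X →L[ℂ] X) : Prop :=
  A * B = B * A ∧ B * A * B = B ∧ A * B * A = A

/-- `S` is the Moore-Penrose inverse of `T`. -/
def IsMPInv (T : Y →L[ℂ] X) (S : X →L[ℂ] Y) : Prop :=
  T ∘L S ∘L T = T ∧ S ∘L T ∘L S = S ∧
  ContinuousLinearMap.adjoint (T ∘L S) = T ∘L S ∧
  ContinuousLinearMap.adjoint (S ∘L T) = S ∘L T

/-- `C` is the core inverse of `T`: `TC` is the orthogonal projection onto `R(T)`
and `R(C) ⊆ R(T)`. -/
def IsCoreInv (T C : X →L[ℂ] X) : Prop :=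
  IsOrthoProjOnto (T * C) (LinearMap.range (T : X →ₗ[ℂ] X)) ∧ LinearMap.range (C : X →ₗ[ℂ] X) ≤ LinearMap.range (T : X →ₗ[ℂ] X)


section AuxLemmas
open Filter
variable {X : Type*} [NormedAddCommGroup X] [InnerProductSpace ℂ X] [CompleteSpace X]

lemma nontrivial_of_quasi (M : X →L[ℂ] X) (h : IsQuasinilpotent M) : Nontrivial X := by
  by_contra hn
  rw [not_nontrivial_iff_subsingleton] at hn
  have hs : Subsingleton (X →L[ℂ] X) :=
    ⟨fun a b => ContinuousLinearMap.ext fun x => Subsingleton.elim _ _⟩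
  have h0 : (0 : ℂ) ∈ spectrum ℂ M := by rw [h]; rfl
  exact (spectrum.mem_iff.mp h0) (isUnit_of_subsingleton _)

lemma nontrivial_CLM (h : Nontrivial X) : Nontrivial (X →L[ℂ] X) := by
  obtain ⟨x, hx⟩ := exists_ne (0 : X)
  exact ⟨1, 0, fun h => hx (by simpa using congrArg (fun f => f x) h)⟩

lemma quasi_pow_small (M : X →L[ℂ] X) (h : IsQuasinilpotent M) {ε : ℝ} (hε : 0 < ε) :
    ∀ᶠ n in atTop, ‖M ^ n‖ ≤ ε ^ n := by
  have hr : spectralRadius ℂ M = 0 := by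
    unfold IsQuasinilpotent at h
    simp [spectralRadius, h]
  have hT := spectrum.pow_norm_pow_one_div_tendsto_nhds_spectralRadius M
  rw [hr] at hT
  have hlt : ∀ᶠ n : ℕ in atTop, ENNReal.ofReal (‖M ^ n‖ ^ (1 / (n:ℝ))) < ENNReal.ofReal ε := by
    refine hT.eventually_lt_const ?_
    simpa using hε
  filter_upwards [hlt, eventually_ge_atTop 1] with n hn hn1
  have hnn : (0:ℝ) < (n:ℝ) := by exact_mod_cast hn1
  have h1 : ‖M ^ n‖ ^ (1 / (n:ℝ)) < ε := by
    rw [ENNReal.ofReal_lt_ofReal_iff hε] at hn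
    exact hn
  have h2 : (‖M ^ n‖ ^ (1 / (n:ℝ))) ^ (n:ℕ) ≤ ε ^ n :=
    pow_le_pow_left₀ (Real.rpow_nonneg (norm_nonneg _) _) h1.le n
  calc ‖M ^ n‖ = (‖M ^ n‖ ^ (1 / (n:ℝ))) ^ (n:ℕ) := by
        rw [← Real.rpow_natCast (‖M ^ n‖ ^ (1 / (n:ℝ))) n, ← Real.rpow_mul (norm_nonneg _),
          one_div, inv_mul_cancel₀ (ne_of_gt hnn), Real.rpow_one]
    _ ≤ ε ^ n := h2

lemma quasi_of_pow_small (M : X →L[ℂ] X) (hnt : Nontrivial X)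
    (h : ∀ ε : ℝ, 0 < ε → ∃ n : ℕ, ‖M ^ (n + 1)‖ < ε ^ (n + 1)) :
    IsQuasinilpotent M := by
  haveI := hnt
  haveI : Nontrivial (X →L[ℂ] X) := nontrivial_CLM hnt
  have hsub : spectrum ℂ M ⊆ {0} := by
    intro z hz
    by_contra hz0
    have hz0 : z ≠ 0 := hz0
    -- show `algebraMap ℂ _ z - M` is a unit, contradicting membership
    set K : X →L[ℂ] X := z⁻¹ • M with hK
    have hzpos : (0:ℝ) < ‖z‖ := norm_pos_iff.mpr hz0
    obtain ⟨n, hn⟩ := h (‖z‖ / 2) (half_pos hzpos)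
    have hKn : ‖K ^ (n + 1)‖ < 1 := by
      have : K ^ (n + 1) = (z⁻¹) ^ (n + 1) • M ^ (n + 1) := by
        rw [hK, smul_pow]
      rw [this, norm_smul, norm_pow, norm_inv]
      calc ‖z‖⁻¹ ^ (n+1) * ‖M ^ (n+1)‖ < ‖z‖⁻¹ ^ (n+1) * (‖z‖/2) ^ (n+1) := by
            apply mul_lt_mul_of_pos_left hn (by positivity)
        _ = (1/2) ^ (n+1) := by
            rw [← mul_pow]; congr 1
            rw [div_eq_mul_inv, ← mul_assoc, inv_mul_cancel₀ hzpos.ne', one_mul, one_div]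
        _ < 1 := by
            apply pow_lt_one₀ (by norm_num) (by norm_num) (Nat.succ_ne_zero n)
    set m := n + 1 with hm
    set u : (X →L[ℂ] X)ˣ := Units.oneSub (K ^ m) hKn with hu
    have hcommKu : Commute K (↑u⁻¹ : X →L[ℂ] X) := by
      have h1 : Commute K (u : X →L[ℂ] X) := by
        have : (u : X →L[ℂ] X) = 1 - K ^ m := rfl
        rw [this]
        exact (Commute.one_right K).sub_right (Commute.pow_right (Commute.refl K) m)
      exact h1.units_inv_right
    have h2 : (∑ i ∈ Finset.range m, K ^ i) * (1 - K) = 1 - K ^ m := by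
      have := congrArg Neg.neg (geom_sum_mul K m)
      simpa [mul_sub, sub_mul, neg_sub] using this
    have hgeom : (1 - K) * (∑ i ∈ Finset.range m, K ^ i) = 1 - K ^ m := by
      have := mul_geom_sum K m
      calc (1 - K) * (∑ i ∈ Finset.range m, K ^ i)
          = -((K - 1) * (∑ i ∈ Finset.range m, K ^ i)) := by
            rw [← neg_mul, neg_sub]
        _ = 1 - K ^ m := by rw [this, neg_sub]
    have hunit1K : IsUnit (1 - K) := by
      have huval : (u : X →L[ℂ] X) = 1 - K ^ m := rfl
      have hright : (1 - K) * ((∑ i ∈ Finset.range m, K ^ i) * ↑u⁻¹) = 1 := by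
        calc (1 - K) * ((∑ i ∈ Finset.range m, K ^ i) * ↑u⁻¹)
            = ((1 - K) * (∑ i ∈ Finset.range m, K ^ i)) * ↑u⁻¹ := by rw [mul_assoc]
          _ = (u : X →L[ℂ] X) * ↑u⁻¹ := by rw [hgeom, huval]
          _ = 1 := u.mul_inv
      have hcomm1Ku : Commute (1 - K) (↑u⁻¹ : X →L[ℂ] X) :=
        (Commute.one_left _).sub_left hcommKu
      have hleft : ((∑ i ∈ Finset.range m, K ^ i) * ↑u⁻¹) * (1 - K) = 1 := by
        calc ((∑ i ∈ Finset.range m, K ^ i) * ↑u⁻¹) * (1 - K)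
            = (∑ i ∈ Finset.range m, K ^ i) * (↑u⁻¹ * (1 - K)) := by rw [mul_assoc]
          _ = (∑ i ∈ Finset.range m, K ^ i) * ((1 - K) * ↑u⁻¹) := by rw [hcomm1Ku.eq]
          _ = ((∑ i ∈ Finset.range m, K ^ i) * (1 - K)) * ↑u⁻¹ := by rw [mul_assoc]
          _ = (u : X →L[ℂ] X) * ↑u⁻¹ := by rw [h2, huval]
          _ = 1 := u.mul_inv
      exact ⟨⟨1 - K, (∑ i ∈ Finset.range m, K ^ i) * ↑u⁻¹, hright, hleft⟩, rfl⟩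
    have : IsUnit (algebraMap ℂ (X →L[ℂ] X) z - M) := by
      have hzu : IsUnit (algebraMap ℂ (X →L[ℂ] X) z) :=
        (isUnit_iff_ne_zero.mpr hz0).map (algebraMap ℂ (X →L[ℂ] X))
      have := hzu.mul hunit1K
      have heq : algebraMap ℂ (X →L[ℂ] X) z * (1 - K) = algebraMap ℂ (X →L[ℂ] X) z - M := by
        rw [Algebra.algebraMap_eq_smul_one, hK]
        rw [mul_sub, mul_one, smul_one_mul, smul_smul, mul_inv_cancel₀ hz0, one_smul]
      rwa [heq] at this
    exact (spectrum.mem_iff.mp hz) this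
  exact (Set.Nonempty.subset_singleton_iff (spectrum.nonempty M)).mp hsub

lemma quasi_mul_comm (N S : X →L[ℂ] X) (hN : IsQuasinilpotent N) (hc : Commute N S) :
    IsQuasinilpotent (N * S) := by
  have hnt := nontrivial_of_quasi N hN
  apply quasi_of_pow_small _ hnt
  intro ε hε
  set c := ‖S‖ + 1 with hcdef
  have hcpos : (0:ℝ) < c := by positivity
  have hev := quasi_pow_small N hN (ε := ε / c) (by positivity)
  obtain ⟨n0, hn0⟩ := eventually_atTop.mp hev
  refine ⟨n0, ?_⟩
  have hb : ‖(N * S) ^ (n0 + 1)‖ ≤ ‖N ^ (n0+1)‖ * ‖S‖ ^ (n0+1) := by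
    rw [hc.mul_pow]
    calc ‖N ^ (n0+1) * S ^ (n0+1)‖ ≤ ‖N ^ (n0+1)‖ * ‖S ^ (n0+1)‖ := norm_mul_le _ _
      _ ≤ ‖N ^ (n0+1)‖ * ‖S‖ ^ (n0+1) := by
          apply mul_le_mul_of_nonneg_left (norm_pow_le' _ (Nat.succ_pos n0)) (norm_nonneg _)
  calc ‖(N * S) ^ (n0 + 1)‖ ≤ ‖N ^ (n0+1)‖ * ‖S‖ ^ (n0+1) := hb
    _ ≤ (ε/c) ^ (n0+1) * ‖S‖ ^ (n0+1) := by
        apply mul_le_mul_of_nonneg_right (hn0 (n0+1) (Nat.le_succ n0)) (by positivity)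
    _ = (ε/c * ‖S‖) ^ (n0+1) := by rw [mul_pow]
    _ < ε ^ (n0+1) := by
        apply pow_lt_pow_left₀ ?_ (by positivity) (Nat.succ_ne_zero n0)
        rw [div_mul_eq_mul_div, div_lt_iff₀ hcpos]
        have : ‖S‖ < c := by rw [hcdef]; linarith
        calc ε * ‖S‖ < ε * c := by exact mul_lt_mul_of_pos_left this hε
          _ ≤ ε * c := le_refl _

lemma vanish_of_eq (T R P' Nq : X →L[ℂ] X) (hq : IsQuasinilpotent Nq)
    (h : ∀ n : ℕ, T = R ^ n * (P' * Nq ^ (n + 1))) : T = 0 := by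
  haveI : Nontrivial X := nontrivial_of_quasi Nq hq
  haveI : Nontrivial (X →L[ℂ] X) := nontrivial_CLM ‹_›
  set c : ℝ := (‖R‖ + 1) * (‖P'‖ + 1) with hc
  have hc1 : (1:ℝ) ≤ ‖R‖ + 1 := by have := norm_nonneg R; linarith
  have hc2 : (1:ℝ) ≤ ‖P'‖ + 1 := by have := norm_nonneg P'; linarith
  have hcpos : (0:ℝ) < c := by positivity
  have hev := quasi_pow_small Nq hq (ε := 1 / (2 * c)) (by positivity)
  have hbound : ∀ᶠ n : ℕ in atTop, ‖T‖ ≤ (1/2) ^ (n + 1) := by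
    obtain ⟨n0, hn0⟩ := eventually_atTop.mp hev
    rw [eventually_atTop]
    refine ⟨n0, fun n hn => ?_⟩
    have hNq : ‖Nq ^ (n+1)‖ ≤ (1 / (2*c)) ^ (n+1) := hn0 (n+1) (le_trans hn (Nat.le_succ n))
    have h1 : ‖T‖ ≤ ‖R‖ ^ n * (‖P'‖ * ‖Nq ^ (n+1)‖) := by
      rw [h n]
      calc ‖R ^ n * (P' * Nq ^ (n+1))‖ ≤ ‖R ^ n‖ * ‖P' * Nq ^ (n+1)‖ := norm_mul_le _ _
        _ ≤ ‖R ^ n‖ * (‖P'‖ * ‖Nq ^ (n+1)‖) := by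
            apply mul_le_mul_of_nonneg_left (norm_mul_le _ _) (norm_nonneg _)
        _ ≤ ‖R‖ ^ n * (‖P'‖ * ‖Nq ^ (n+1)‖) := by
            apply mul_le_mul_of_nonneg_right (norm_pow_le _ n) (by positivity)
    have h2 : ‖R‖ ^ n * (‖P'‖ * ‖Nq ^ (n+1)‖) ≤ c ^ (n+1) * (1/(2*c)) ^ (n+1) := by
      have hR : ‖R‖ ^ n ≤ (‖R‖ + 1) ^ (n+1) := by
        calc ‖R‖ ^ n ≤ (‖R‖ + 1) ^ n := by
              apply pow_le_pow_left₀ (norm_nonneg _) (by linarith)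
          _ ≤ (‖R‖ + 1) ^ (n+1) := by
              apply pow_le_pow_right₀ hc1 (Nat.le_succ n)
      have hP : ‖P'‖ ≤ (‖P'‖ + 1) ^ (n+1) := by
        calc ‖P'‖ ≤ ‖P'‖ + 1 := by linarith
          _ = (‖P'‖ + 1) ^ 1 := (pow_one _).symm
          _ ≤ (‖P'‖ + 1) ^ (n+1) := pow_le_pow_right₀ hc2 (Nat.le_add_left 1 n)
      calc ‖R‖ ^ n * (‖P'‖ * ‖Nq ^ (n+1)‖)
          ≤ (‖R‖+1) ^ (n+1) * ((‖P'‖+1) ^ (n+1) * (1/(2*c)) ^ (n+1)) := by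
            apply mul_le_mul hR ?_ (by positivity) (by positivity)
            apply mul_le_mul hP hNq (norm_nonneg _) (by positivity)
        _ = c ^ (n+1) * (1/(2*c)) ^ (n+1) := by rw [hc, mul_pow]; ring
    have h3 : c ^ (n+1) * (1/(2*c)) ^ (n+1) = (1/2) ^ (n+1) := by
      rw [← mul_pow]
      congr 1
      field_simp
    linarith [h1, h2.trans_eq h3]
  have hT0 : ‖T‖ ≤ 0 := by
    have htend : Tendsto (fun n : ℕ => ((1:ℝ)/2) ^ (n + 1)) atTop (nhds 0) := by
      have := tendsto_pow_atTop_nhds_zero_of_lt_one (by norm_num : (0:ℝ) ≤ 1/2) (by norm_num)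
      exact this.comp (tendsto_add_atTop_nat 1)
    exact ge_of_tendsto htend hbound
  simpa using le_antisymm hT0 (norm_nonneg T)

lemma quasi_star (T : X →L[ℂ] X) (h : IsQuasinilpotent T) : IsQuasinilpotent (star T) := by
  unfold IsQuasinilpotent at h ⊢
  rw [spectrum.map_star, h]
  ext z
  simp [Set.mem_star]

lemma gdrazin_star (A B : X →L[ℂ] X) (h : IsGDrazinInv A B) :
    IsGDrazinInv (star A) (star B) := by
  obtain ⟨h1, h2, h3⟩ := h
  refine ⟨?_, ?_, ?_⟩
  · rw [← star_mul, ← h1, star_mul]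
  · calc star B * star A * star B = star (B * (A * B)) := by rw [← star_mul, ← star_mul]
      _ = star B := by rw [← mul_assoc, h2]
  · have : star A - star A * star A * star B = star (A - B * A * A) := by
      simp [star_sub, star_mul, mul_assoc]
    rw [this]
    have hBAA : B * A * A = A * A * B := by
      rw [← h1, mul_assoc, ← h1, mul_assoc]
    rw [hBAA]
    exact quasi_star _ h3

lemma gdrazin_proj_absorb (A B1 B2 : X →L[ℂ] X) (h1 : IsGDrazinInv A B1)
    (h2 : IsGDrazinInv A B2) : (A * B2) * (1 - A * B1) = 0 := by
  obtain ⟨h1c, h1i, h1q⟩ := h1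
  obtain ⟨h2c, h2i, h2q⟩ := h2
  set Q1 := A * B1 with hQ1
  set Q2 := A * B2 with hQ2
  have hN1 : A - A * A * B1 = A * (1 - Q1) := by
    rw [mul_sub, mul_one, hQ1, mul_assoc]
  have hQ1A : (1 - Q1) * A = A * (1 - Q1) := by
    have : Q1 * A = A * Q1 := by
      rw [hQ1, mul_assoc, ← h1c, ← mul_assoc]
    rw [sub_mul, mul_sub, one_mul, mul_one, this]
  have hQ1idem : Q1 * Q1 = Q1 := by
    rw [hQ1, mul_assoc, ← mul_assoc B1 A B1, h1i]
  have h1QQ : (1 - Q1) * (1 - Q1) = 1 - Q1 := by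
    rw [sub_mul, mul_sub, mul_sub, one_mul, mul_one, hQ1idem]
    abel
  have hQ2idem : Q2 * Q2 = Q2 := by
    rw [hQ2, mul_assoc, ← mul_assoc B2 A B2, h2i]
  have hNpow : ∀ n : ℕ, (A * (1 - Q1)) ^ (n + 1) = A ^ (n + 1) * (1 - Q1) := by
    intro n
    induction n with
    | zero => simp
    | succ n ih =>
      rw [pow_succ, ih, mul_assoc, ← mul_assoc (1 - Q1) A (1 - Q1), hQ1A,
        mul_assoc A (1 - Q1) (1 - Q1), h1QQ, ← mul_assoc, ← pow_succ]
  have hQ2pow : ∀ n : ℕ, Q2 ^ (n + 1) = Q2 := by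
    intro n
    induction n with
    | zero => simp
    | succ n ih => rw [pow_succ, ih, hQ2idem]
  have hkey : ∀ n : ℕ, Q2 * (1 - Q1) = B2 ^ n * (B2 * (A * (1 - Q1)) ^ (n + 1)) := by
    intro n
    have hcomm : Commute B2 A := h2c.symm
    calc Q2 * (1 - Q1) = Q2 ^ (n + 1) * (1 - Q1) := by rw [hQ2pow]
      _ = (B2 * A) ^ (n + 1) * (1 - Q1) := by rw [h2c]
      _ = B2 ^ (n + 1) * A ^ (n + 1) * (1 - Q1) := by rw [hcomm.mul_pow]
      _ = B2 ^ n * (B2 * (A ^ (n + 1) * (1 - Q1))) := by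
          rw [pow_succ, mul_assoc, mul_assoc]
      _ = B2 ^ n * (B2 * (A * (1 - Q1)) ^ (n + 1)) := by rw [hNpow]
  exact vanish_of_eq _ B2 B2 (A * (1 - Q1)) (hN1 ▸ h1q) hkey

lemma gdrazin_unique (A B1 B2 : X →L[ℂ] X) (h1 : IsGDrazinInv A B1)
    (h2 : IsGDrazinInv A B2) : B1 = B2 := by
  set Q1 := A * B1 with hQ1
  set Q2 := A * B2 with hQ2
  have k21 : Q2 * (1 - Q1) = 0 := gdrazin_proj_absorb A B1 B2 h1 h2
  have k12 : Q1 * (1 - Q2) = 0 := gdrazin_proj_absorb A B2 B1 h2 h1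
  have e2 : Q2 = Q2 * Q1 := by
    have := k21
    rw [mul_sub, mul_one, sub_eq_zero] at this
    exact this
  have e1 : Q1 = Q1 * Q2 := by
    have := k12
    rw [mul_sub, mul_one, sub_eq_zero] at this
    exact this
  -- star versions
  have ks : (star A * star B2) * (1 - star A * star B1) = 0 :=
    gdrazin_proj_absorb (star A) (star B1) (star B2) (gdrazin_star A B1 h1)
      (gdrazin_star A B2 h2)
  have hsQ1 : star A * star B1 = star Q1 := by
    rw [hQ1, ← star_mul, h1.1]
  have hsQ2 : star A * star B2 = star Q2 := by
    rw [hQ2, ← star_mul, h2.1]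
  rw [hsQ1, hsQ2] at ks
  have e3 : Q2 = Q1 * Q2 := by
    rw [mul_sub, mul_one, sub_eq_zero] at ks
    have := congrArg star ks
    rwa [star_star, ← star_mul, star_star] at this
  have eQ : Q1 = Q2 := by rw [e1, ← e3]
  -- conclude
  have hB1 : B1 = B1 * Q1 := by
    rw [hQ1, ← mul_assoc]
    exact (h1.2.1).symm
  have hB2 : Q2 * B2 = B2 := by
    rw [hQ2, h2.1]
    exact h2.2.1
  calc B1 = B1 * Q1 := hB1
    _ = B1 * Q2 := by rw [eQ]
    _ = B1 * (A * B2) := by rw [hQ2]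
    _ = (B1 * A) * B2 := by rw [mul_assoc]
    _ = Q1 * B2 := by rw [hQ1, h1.1]
    _ = Q2 * B2 := by rw [eQ]
    _ = B2 := hB2

lemma npow_fact (A B : X →L[ℂ] X) (hcAB : A * B = B * A) (hi : B * A * B = B) :
    ∀ n : ℕ, (A - A * A * B) ^ (n + 1) = A ^ (n + 1) * (1 - A * B) := by
  have hN1 : A - A * A * B = A * (1 - A * B) := by
    rw [mul_sub, mul_one, mul_assoc]
  have hQ1A : (1 - A * B) * A = A * (1 - A * B) := by
    have : (A * B) * A = A * (A * B) := by
      rw [mul_assoc, ← hcAB, ← mul_assoc]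
    rw [sub_mul, mul_sub, one_mul, mul_one, this]
  have hQ1idem : (A * B) * (A * B) = A * B := by
    rw [mul_assoc, ← mul_assoc B A B, hi]
  have h1QQ : (1 - A * B) * (1 - A * B) = 1 - A * B := by
    rw [sub_mul, mul_sub, mul_sub, one_mul, mul_one, hQ1idem]
    abel
  intro n
  rw [hN1]
  induction n with
  | zero => simp
  | succ n ih =>
    rw [pow_succ, ih, mul_assoc, ← mul_assoc (1 - A * B) A (1 - A * B), hQ1A,
      mul_assoc A (1 - A * B) (1 - A * B), h1QQ, ← mul_assoc, ← pow_succ]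

lemma absorb_of_range_le (P T : X →L[ℂ] X) (hidem : P * P = P)
    (hle : LinearMap.range (T : X →ₗ[ℂ] X) ≤ LinearMap.range (P : X →ₗ[ℂ] X)) : P * T = T := by
  ext x
  obtain ⟨y, hy⟩ := hle (LinearMap.mem_range.mpr ⟨x, rfl⟩)
  show P (T x) = T x
  calc P (T x) = P (P y) := congrArg P hy.symm
    _ = (P * P) y := rfl
    _ = P y := by rw [hidem]
    _ = T x := hy

lemma orthoproj_unique (P1 P2 : X →L[ℂ] X) (S : Submodule ℂ X)
    (h1 : P1 * P1 = P1 ∧ ContinuousLinearMap.adjoint P1 = P1 ∧ LinearMap.range (P1 : X →ₗ[ℂ] X) = S)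
    (h2 : P2 * P2 = P2 ∧ ContinuousLinearMap.adjoint P2 = P2 ∧ LinearMap.range (P2 : X →ₗ[ℂ] X) = S) :
    P1 = P2 := by
  obtain ⟨h1i, h1a, h1r⟩ := h1
  obtain ⟨h2i, h2a, h2r⟩ := h2
  have hs1 : star P1 = P1 := by rw [star_eq_adjoint]; exact h1a
  have hs2 : star P2 = P2 := by rw [star_eq_adjoint]; exact h2a
  have a1 : P1 * P2 = P2 := absorb_of_range_le P1 P2 h1i (by rw [h2r, h1r])
  have a2 : P2 * P1 = P1 := absorb_of_range_le P2 P1 h2i (by rw [h1r, h2r])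
  calc P1 = P2 * P1 := a2.symm
    _ = star (star P1 * star P2) := by rw [star_mul, star_star, star_star]
    _ = star (P1 * P2) := by rw [hs1, hs2]
    _ = star P2 := by rw [a1]
    _ = P2 := hs2

end AuxLemmas

open Filter

theorem stmt18
    (A Ad : X →L[ℂ] X) (hAd : IsGDrazinInv A Ad)
    (Ace : X →L[ℂ] X) (hAce : IsCoreEPInv A Ad Ace)
    (Aot : X →L[ℂ] X) (hAot : Aot = Ace * Ace * A) :
    (∃ D : X →L[ℂ] X, IsGDrazinInv (A * A) D) ∧
    (∀ D C : X →L[ℂ] X, IsGDrazinInv (A * A) D → IsCoreEPInv (A * A) D C →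
      List.TFAE
        [A * Aot = Aot * A,
          Aot * Aot = C * C * (A * A),
          Aot = Aot * Aot * A]) ∧
    (A * Aot = Aot * A → Aot = Ad) := by
  obtain ⟨hc, h2, hq⟩ := hAd
  obtain ⟨⟨hPP, hPadj, hPrange⟩, hAceR⟩ := hAce
  haveI hntX : Nontrivial X := nontrivial_of_quasi _ hq
  set P : X →L[ℂ] X := A * Ace with hPdef
  -- basic commutation/reduction identities
  have hcom : Commute A Ad := hc
  have r1 : Ad * (A * Ad) = Ad := by rw [← mul_assoc]; exact h2
  have r2 : A * (Ad * Ad) = Ad := by rw [← mul_assoc, hc]; exact h2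
  have comm' : ∀ T : X →L[ℂ] X, A * (Ad * T) = Ad * (A * T) := by
    intro T; rw [← mul_assoc, hc, mul_assoc]
  have r1' : ∀ T : X →L[ℂ] X, Ad * (A * (Ad * T)) = Ad * T := by
    intro T
    calc Ad * (A * (Ad * T)) = (Ad * A * Ad) * T := by simp only [mul_assoc]
      _ = Ad * T := by rw [h2]
  have r2' : ∀ T : X →L[ℂ] X, A * (Ad * (Ad * T)) = Ad * T := by
    intro T
    calc A * (Ad * (Ad * T)) = (A * (Ad * Ad)) * T := by simp only [mul_assoc]
      _ = Ad * T := by rw [r2]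
  have rAdAdA : ∀ T : X →L[ℂ] X, Ad * (Ad * (A * T)) = Ad * T := by
    intro T
    rw [show Ad * (Ad * (A * T)) = (Ad * (Ad * A)) * T by simp only [mul_assoc], ← hc, r1]
  -- range-based identities
  have hfixP : ∀ v, v ∈ LinearMap.range (Ad : X →ₗ[ℂ] X) → P v = v := by
    intro v hv
    rw [← hPrange] at hv
    obtain ⟨w, hw⟩ := hv
    calc P v = P (P w) := congrArg P hw.symm
      _ = (P * P) w := rfl
      _ = P w := by rw [hPP]
      _ = v := hw
  have hPAd : P * Ad = Ad := by
    ext x; exact hfixP (Ad x) ⟨x, rfl⟩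
  have hPAd' : ∀ T : X →L[ℂ] X, P * (Ad * T) = Ad * T := by
    intro T; rw [← mul_assoc, hPAd]
  have hQAd : (A * Ad) * Ad = Ad := by rw [mul_assoc]; exact r2
  have hQP : (A * Ad) * P = P := by
    ext x
    show (A * Ad) (P x) = P x
    have hPx : P x ∈ LinearMap.range (Ad : X →ₗ[ℂ] X) := hPrange ▸ ⟨x, rfl⟩
    obtain ⟨y, hy⟩ := hPx
    calc (A * Ad) (P x) = (A * Ad) (Ad y) := congrArg (A * Ad) hy.symm
      _ = ((A * Ad) * Ad) y := rfl
      _ = Ad y := by rw [hQAd]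
      _ = P x := hy
  have hQP' : ∀ T : X →L[ℂ] X, (A * Ad) * (P * T) = P * T := by
    intro T; rw [← mul_assoc, hQP]
  have hPQ : P * (A * Ad) = A * Ad := by
    ext x
    show P ((A * Ad) x) = (A * Ad) x
    apply hfixP
    refine ⟨A x, ?_⟩
    calc Ad (A x) = (Ad * A) x := rfl
      _ = (A * Ad) x := by rw [hc]
  have hAceEq : Ace = Ad * P := by
    symm
    rw [hPdef, ← mul_assoc]
    ext x
    show (Ad * A) (Ace x) = Ace x
    obtain ⟨y, hy⟩ := hAceR ⟨x, rfl⟩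
    calc (Ad * A) (Ace x) = (Ad * A) (Ad y) := congrArg (Ad * A) hy.symm
      _ = (Ad * A * Ad) y := rfl
      _ = Ad y := by rw [h2]
      _ = Ace x := hy
  -- normal forms
  have sAot : Aot = Ad * (Ad * (P * A)) := by
    rw [hAot, hAceEq]
    simp only [mul_assoc]
    rw [hPAd']
  have sAAot : A * Aot = Ad * (P * A) := by
    rw [sAot, r2']
  have sAotA : Aot * A = Ad * (Ad * (P * (A * A))) := by
    rw [sAot]; simp only [mul_assoc]
  have sAot2 : Aot * Aot = Ad * (Ad * (Ad * (P * A))) := by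
    rw [sAot]
    simp only [mul_assoc]
    rw [r2', hPAd']
  have sAot2A : Aot * Aot * A = Ad * (Ad * (Ad * (P * (A * A)))) := by
    rw [sAot2]; simp only [mul_assoc]
  -- part 1 : A * A has gDrazin inverse Ad * Ad
  have cA_AA : Commute A (A * A) := (Commute.refl A).mul_right (Commute.refl A)
  have cA_u : Commute A (A * A * Ad) := ((Commute.refl A).mul_right (Commute.refl A)).mul_right hcom
  have hDgd : IsGDrazinInv (A * A) (Ad * Ad) := by
    refine ⟨?_, ?_, ?_⟩
    · exact ((hcom.mul_right hcom).mul_left (hcom.mul_right hcom)).eq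
    · show Ad * Ad * (A * A) * (Ad * Ad) = Ad * Ad
      simp only [mul_assoc]
      rw [r2, r1]
    · show IsQuasinilpotent (A * A - A * A * (A * A) * (Ad * Ad))
      have huu : (A * A * Ad) * (A * A * Ad) = A * A * (A * A) * (Ad * Ad) := by
        simp only [mul_assoc]
        rw [← comm' (A * Ad), ← comm' Ad]
      have hfact : A * A - A * A * (A * A) * (Ad * Ad)
          = (A - A * A * Ad) * (A + A * A * Ad) := by
        rw [sub_mul, mul_add, mul_add, cA_u.eq, huu]
        abel
      rw [hfact]
      refine quasi_mul_comm _ _ hq ?_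
      have cN_A : Commute (A - A * A * Ad) A := (Commute.refl A).sub_left cA_u.symm
      have cN_u : Commute (A - A * A * Ad) (A * A * Ad) := cA_u.sub_left (Commute.refl _)
      exact cN_A.add_right cN_u
  refine ⟨⟨Ad * Ad, hDgd⟩, ?_, ?_⟩
  · -- TFAE part
    intro D C hD hC
    obtain ⟨⟨hCPi, hCPa, hCPr⟩, hCle⟩ := hC
    have hDAd : D = Ad * Ad := gdrazin_unique (A * A) D (Ad * Ad) hD hDgd
    have hrange2 : LinearMap.range ((Ad * Ad : X →L[ℂ] X) : X →ₗ[ℂ] X) = LinearMap.range (Ad : X →ₗ[ℂ] X) := by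
      apply le_antisymm
      · rintro v ⟨y, rfl⟩
        exact ⟨Ad y, rfl⟩
      · rintro v ⟨y, rfl⟩
        refine ⟨A y, ?_⟩
        show Ad (Ad (A y)) = Ad y
        calc Ad (Ad (A y)) = (Ad * (Ad * A)) y := rfl
          _ = (Ad * (A * Ad)) y := by rw [hc]
          _ = Ad y := by rw [r1]
    have hCPr' : LinearMap.range (((A * A) * C : X →L[ℂ] X) : X →ₗ[ℂ] X) = LinearMap.range (Ad : X →ₗ[ℂ] X) := by
      rw [hCPr, hDAd, hrange2]
    have hP2eqP : (A * A) * C = P := by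
      refine orthoproj_unique _ _ (LinearMap.range (Ad : X →ₗ[ℂ] X)) ⟨hCPi, hCPa, hCPr'⟩
        ⟨hPP, hPadj, hPrange⟩
    have hCeq : C = Ad * (Ad * P) := by
      have step1 : D * ((A * A) * C) = C := by
        ext x
        have hx : C x ∈ LinearMap.range (D : X →ₗ[ℂ] X) := hCle ⟨x, rfl⟩
        obtain ⟨y, hy⟩ := hx
        show D ((A * A) (C x)) = C x
        calc D ((A * A) (C x)) = D ((A * A) (D y)) := congrArg (fun z => D ((A * A) z)) hy.symm
          _ = (D * (A * A) * D) y := rfl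
          _ = D y := by rw [hD.2.1]
          _ = C x := hy
      rw [hP2eqP, hDAd] at step1
      rw [← step1, mul_assoc]
    have sCC : C * C * (A * A) = Ad * (Ad * (Ad * (Ad * (P * (A * A))))) := by
      rw [hCeq]
      simp only [mul_assoc]
      rw [hPAd']
    -- reduce the three statements to normal forms
    have t1 : (A * Aot = Aot * A) ↔
        (Ad * (P * A) = Ad * (Ad * (P * (A * A)))) := by rw [sAAot, sAotA]
    have t3 : (Aot = Aot * Aot * A) ↔
        (Ad * (Ad * (P * A)) = Ad * (Ad * (Ad * (P * (A * A))))) := by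
      rw [sAot2A, sAot]
    have t2 : (Aot * Aot = C * C * (A * A)) ↔
        (Ad * (Ad * (Ad * (P * A))) = Ad * (Ad * (Ad * (Ad * (P * (A * A)))))) := by
      rw [sAot2, sCC]
    have e12 : (Ad * (P * A) = Ad * (Ad * (P * (A * A)))) ↔
        (Ad * (Ad * (P * A)) = Ad * (Ad * (Ad * (P * (A * A))))) := by
      constructor
      · intro h; exact congrArg (fun T => Ad * T) h
      · intro h
        have := congrArg (fun T => A * T) h
        simpa only [r2'] using this
    have e23 : (Ad * (Ad * (P * A)) = Ad * (Ad * (Ad * (P * (A * A))))) ↔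
        (Ad * (Ad * (Ad * (P * A))) = Ad * (Ad * (Ad * (Ad * (P * (A * A)))))) := by
      constructor
      · intro h; exact congrArg (fun T => Ad * T) h
      · intro h
        have := congrArg (fun T => A * T) h
        simpa only [r2'] using this
    tfae_have 1 ↔ 3 := t1.trans (e12.trans t3.symm)
    tfae_have 3 ↔ 2 := t3.trans (e23.trans t2.symm)
    tfae_finish
  · -- if A and Aot commute then Aot = Ad
    intro hcommi
    have E1 : Ad * (P * A) = Ad * (Ad * (P * (A * A))) := by
      rw [← sAAot, ← sAotA]; exact hcommi
    have hstar : P * A = Ad * (P * (A * A)) := by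
      have := congrArg (fun T => A * T) E1
      rw [r2'] at this
      rw [show A * (Ad * (P * A)) = (A * Ad) * (P * A) from (mul_assoc _ _ _).symm,
        hQP'] at this
      exact this
    have hstar' : ∀ T : X →L[ℂ] X, P * (A * T) = Ad * (P * (A * (A * T))) := by
      intro T
      calc P * (A * T) = (P * A) * T := by rw [← mul_assoc P A T]
        _ = (Ad * (P * (A * A))) * T := by rw [hstar]
        _ = Ad * (P * (A * (A * T))) := by simp only [mul_assoc]
    have hApow : ∀ (k : ℕ) (T : X →L[ℂ] X), A * (A ^ k * T) = A ^ (k + 1) * T := by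
      intro k T; rw [← mul_assoc, ← pow_succ']
    have hNpow : ∀ n : ℕ, (A - A * A * Ad) ^ (n + 1) = A ^ (n + 1) * (1 - A * Ad) :=
      npow_fact A Ad hc h2
    have key : ∀ n : ℕ, P * (A - A * A * Ad)
        = Ad ^ n * (P * (A - A * A * Ad) ^ (n + 1)) := by
      intro n
      induction n with
      | zero => simp
      | succ n ih =>
        have hstep : Ad * (P * (A - A * A * Ad) ^ (n + 1 + 1))
            = P * (A - A * A * Ad) ^ (n + 1) := by
          rw [hNpow, hNpow]
          have h1 : A ^ (n + 1) * (1 - A * Ad) = A * (A ^ n * (1 - A * Ad)) := by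
            rw [hApow]
          rw [h1, hstar']
          congr 2
          rw [hApow n, hApow (n + 1)]
        calc P * (A - A * A * Ad)
            = Ad ^ n * (P * (A - A * A * Ad) ^ (n + 1)) := ih
          _ = Ad ^ n * (Ad * (P * (A - A * A * Ad) ^ (n + 1 + 1))) := by rw [hstep]
          _ = Ad ^ (n + 1) * (P * (A - A * A * Ad) ^ (n + 1 + 1)) := by
              rw [← mul_assoc, ← pow_succ]
    have hPN : P * (A - A * A * Ad) = 0 := vanish_of_eq _ Ad P _ hq key
    have hPA : P * A = P * (A * (A * Ad)) := by
      rw [mul_sub] at hPN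
      have h := sub_eq_zero.mp hPN
      rw [h, mul_assoc A A Ad]
    rw [sAot, hPA]
    calc Ad * (Ad * (P * (A * (A * Ad))))
        = Ad * (Ad * (P * (A * (Ad * A)))) := by rw [hc]
      _ = Ad * (Ad * (P * (Ad * (A * A)))) := by rw [comm' A]
      _ = Ad * (Ad * (Ad * (A * A))) := by rw [hPAd']
      _ = Ad * (Ad * A) := by rw [rAdAdA A]
      _ = Ad * (A * Ad) := by rw [hc]
      _ = Ad := r1
end

section
/- Let A ∈ B(X) be generalized Drazin invertible and let B ∈ B(X). Then: (i) the following are equivalent: AA^⊗ = BA^⊗; A^ⓓA = B(A^ⓓ)²A; A^ⓓ = B(A^ⓓ)²; A^d = BA^ⓓA^d; AA^d = BA^d. (ii) A^⊗A = A^⊗B if and only if A^ⓓA² = A^ⓓAB. -/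
open ContinuousLinearMap

variable {X Y : Type*}
  [NormedAddCommGroup X] [InnerProductSpace ℂ X] [CompleteSpace X]
  [NormedAddCommGroup Y] [InnerProductSpace ℂ Y] [CompleteSpace Y]

theorem stmt19
    (A Ad : X →L[ℂ] X) (hAd : IsGDrazinInv A Ad)
    (Ace : X →L[ℂ] X) (hAce : IsCoreEPInv A Ad Ace)
    (Aot : X →L[ℂ] X) (hAot : Aot = Ace * Ace * A)
    (B : X →L[ℂ] X) :
    List.TFAE
      [A * Aot = B * Aot,
        Ace * A = B * Ace * Ace * A,
        Ace = B * Ace * Ace,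
        Ad = B * Ace * Ad,
        A * Ad = B * Ad] ∧
    (Aot * A = Aot * B ↔ Ace * A * A = Ace * A * B) := by

  obtain ⟨h1, h2, -⟩ := hAd
  obtain ⟨⟨hPP, -, hPr⟩, hAceR⟩ := hAce
  -- pointwise versions
  have h1p : ∀ x, A (Ad x) = Ad (A x) := by
    have := ContinuousLinearMap.ext_iff.mp h1
    simp only [ContinuousLinearMap.mul_apply] at this
    exact this
  have h2p : ∀ x, Ad (A (Ad x)) = Ad x := by
    have := ContinuousLinearMap.ext_iff.mp h2
    simp only [ContinuousLinearMap.mul_apply] at this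
    exact this
  have pP : ∀ x, A (Ace (A (Ace x))) = A (Ace x) := by
    have := ContinuousLinearMap.ext_iff.mp hPP
    simp only [ContinuousLinearMap.mul_apply] at this
    exact this
  -- P = A ∘ Ace fixes range Ad pointwise
  have pfix : ∀ y, A (Ace (Ad y)) = Ad y := by
    intro y
    have hy : Ad y ∈ LinearMap.range ((A * Ace : X →L[ℂ] X) : X →ₗ[ℂ] X) := by
      rw [hPr]; exact ⟨y, rfl⟩
    obtain ⟨w, hw⟩ := hy
    change A (Ace w) = Ad y at hw
    rw [← hw, pP]
  have f2 : ∀ x, Ad (A (Ace x)) = Ace x := by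
    intro x
    obtain ⟨y, hy⟩ := hAceR ⟨x, rfl⟩
    change Ad y = Ace x at hy
    rw [← hy, h2p]
  have f1 : ∀ x, A (Ace (Ace x)) = Ace x := by
    intro x
    obtain ⟨y, hy⟩ := hAceR ⟨x, rfl⟩
    change Ad y = Ace x at hy
    rw [← hy, pfix]
  have faad : ∀ x, A (Ad (Ace x)) = Ace x := by
    intro x
    obtain ⟨y, hy⟩ := hAceR ⟨x, rfl⟩
    change Ad y = Ace x at hy
    rw [← hy, h1p, h2p]
  have f3 : ∀ x, Ace (A (Ad x)) = Ad x := by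
    intro x
    rw [← f2 (A (Ad x)), h1p x, pfix, ← h1p, h2p]
  have f4 : ∀ x, Ace (A (Ace x)) = Ace x := by
    intro x
    rw [← f2 (A (Ace x)), pP, f2]
  subst hAot
  constructor
  · tfae_have 1 → 2 := by
      intro h
      have hp := ContinuousLinearMap.ext_iff.mp h
      simp only [ContinuousLinearMap.mul_apply] at hp
      ext x
      simp only [ContinuousLinearMap.mul_apply]
      calc Ace (A x) = A (Ace (Ace (A x))) := (f1 (A x)).symm
        _ = B (Ace (Ace (A x))) := hp x
    tfae_have 2 → 3 := by
      intro h
      have hp := ContinuousLinearMap.ext_iff.mp h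
      simp only [ContinuousLinearMap.mul_apply] at hp
      ext x
      simp only [ContinuousLinearMap.mul_apply]
      calc Ace x = Ace (A (Ace x)) := (f4 x).symm
        _ = B (Ace (Ace (A (Ace x)))) := hp (Ace x)
        _ = B (Ace (Ace x)) := by rw [f4]
    tfae_have 3 → 4 := by
      intro h
      have hp := ContinuousLinearMap.ext_iff.mp h
      simp only [ContinuousLinearMap.mul_apply] at hp
      ext x
      simp only [ContinuousLinearMap.mul_apply]
      calc Ad x = Ace (A (Ad x)) := (f3 x).symm
        _ = B (Ace (Ace (A (Ad x)))) := hp (A (Ad x))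
        _ = B (Ace (Ad x)) := by rw [f3]
    tfae_have 4 → 5 := by
      intro h
      have hp := ContinuousLinearMap.ext_iff.mp h
      simp only [ContinuousLinearMap.mul_apply] at hp
      ext x
      simp only [ContinuousLinearMap.mul_apply]
      calc A (Ad x) = Ad (A x) := h1p x
        _ = B (Ace (Ad (A x))) := hp (A x)
        _ = B (Ace (A (Ad x))) := by rw [h1p]
        _ = B (Ad x) := by rw [f3]
    tfae_have 5 → 1 := by
      intro h
      have hp := ContinuousLinearMap.ext_iff.mp h
      simp only [ContinuousLinearMap.mul_apply] at hp
      ext x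
      simp only [ContinuousLinearMap.mul_apply]
      refine Eq.symm ?_
      calc B (Ace (Ace (A x))) = B (Ad (A (Ace (Ace (A x))))) := by rw [f2]
        _ = A (Ad (A (Ace (Ace (A x))))) := (hp _).symm
        _ = A (Ace (Ace (A x))) := by rw [f2]
    tfae_finish
  · constructor
    · intro h
      have hp := ContinuousLinearMap.ext_iff.mp h
      simp only [ContinuousLinearMap.mul_apply] at hp
      ext x
      simp only [ContinuousLinearMap.mul_apply]
      calc Ace (A (A x)) = A (Ace (Ace (A (A x)))) := (f1 _).symm
        _ = A (Ace (Ace (A (B x)))) := congrArg A (hp x)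
        _ = Ace (A (B x)) := f1 _
    · intro h
      have hp := ContinuousLinearMap.ext_iff.mp h
      simp only [ContinuousLinearMap.mul_apply] at hp
      ext x
      simp only [ContinuousLinearMap.mul_apply]
      exact congrArg Ace (hp x)
end
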